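/- Let F : 𝕋³ → ℝ² (with coordinates (Ψ,φ) = (ψ₁,ψ₂,φ), each 2π-periodic) satisfy the symmetry property F(−JΨ, φ + π/2) = F(Ψ, φ) for all (Ψ,φ), where J = R_{−π/2}. If (Ψ(t), φ(t)) is a solution of the system Ψ' = R_φ(V + F(Ψ,φ)), φ' = ω, where V ∈ ℝ² is a constant vector and ω ∈ ℝ, then (J Ψ(t), φ(t) − π/2) is also a solution. -/

import Mathlib

/-!
Since `J = R_{-π/2}`, we have `R_{φ-π/2} = J R_φ` and `J² = -1`; the latter turns the symmetry of `F`
into `F(JΨ, φ - π/2) = F(Ψ, φ)`. Differentiating `JΨ` then gives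
`J R_φ (V + F(Ψ, φ)) = R_{φ-π/2} (V + F(JΨ, φ - π/2))`.
-/

open Real Matrix

/-- Rotation matrix by angle `θ`. -/
noncomputable def rot (θ : ℝ) : Matrix (Fin 2) (Fin 2) ℝ :=
  !![Real.cos θ, -Real.sin θ; Real.sin θ, Real.cos θ]

/-- `J = [[0,1],[−1,0]] = R_{−π/2}`. -/
def Jmat : Matrix (Fin 2) (Fin 2) ℝ := !![0, 1; -1, 0]

theorem HasDerivAt.matrix_mulVec {𝕜 : Type*} [NontriviallyNormedField 𝕜] [CompleteSpace 𝕜]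
    {m n : Type*} [Fintype m] [Fintype n] (A : Matrix m n 𝕜) {f : 𝕜 → n → 𝕜} {f' : n → 𝕜} {x : 𝕜} (hf : HasDerivAt f f' x) : HasDerivAt (fun s => A *ᵥ f s) (A *ᵥ f') x :=
  (Matrix.mulVecLin A).toContinuousLinearMap.hasFDerivAt.comp_hasDerivAt x hf

theorem rot_add (θ φ : ℝ) : rot (θ + φ) = rot θ * rot φ := by
  ext i j
  fin_cases i <;> fin_cases j <;> simp [rot, cos_add, sin_add] <;> ring

theorem rot_neg_pi_div_two : rot (-(π / 2)) = Jmat := by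
  simp [rot, Jmat]

theorem rot_sub_pi_div_two (θ : ℝ) : rot (θ - π / 2) = Jmat * rot θ := by
  rw [sub_eq_neg_add, rot_add, rot_neg_pi_div_two]

theorem Jmat_mul_Jmat : Jmat * Jmat = -1 := by
  ext i j
  fin_cases i <;> fin_cases j <;> simp [Jmat]

theorem Jmat_mulVec_Jmat_mulVec (v : Fin 2 → ℝ) : Jmat *ᵥ Jmat *ᵥ v = -v := by
  rw [mulVec_mulVec, Jmat_mul_Jmat, neg_mulVec, one_mulVec]

theorem apply_Jmat_mulVec_sub_pi_div_two {E : Type*} {F : (Fin 2 → ℝ) → ℝ → E}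
    (hsym : ∀ Ψ φ, F (-(Jmat *ᵥ Ψ)) (φ + π / 2) = F Ψ φ) (Ψ : Fin 2 → ℝ) (φ : ℝ) :
    F (Jmat *ᵥ Ψ) (φ - π / 2) = F Ψ φ := by
  rw [← hsym, Jmat_mulVec_Jmat_mulVec, neg_neg, sub_add_cancel]

theorem symmetry_maps_solutions_to_solutions_general
    (F : (Fin 2 → ℝ) → ℝ → (Fin 2 → ℝ)) (V : Fin 2 → ℝ) (ω : ℝ)
    (hsym : ∀ Ψ φ, F (-(Jmat *ᵥ Ψ)) (φ + π / 2) = F Ψ φ)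
    (Ψ : ℝ → Fin 2 → ℝ) (φ : ℝ → ℝ)
    (hΨ : ∀ t, HasDerivAt Ψ (rot (φ t) *ᵥ (V + F (Ψ t) (φ t))) t)
    (hφ : ∀ t, HasDerivAt φ ω t) :
    (∀ t, HasDerivAt (fun s => Jmat *ᵥ Ψ s)
        (rot (φ t - π / 2) *ᵥ (V + F (Jmat *ᵥ Ψ t) (φ t - π / 2))) t) ∧
    (∀ t, HasDerivAt (fun s => φ s - π / 2) ω t) := by
  refine ⟨fun t => ?_, fun t => (hφ t).sub_const (π / 2)⟩
  rw [apply_Jmat_mulVec_sub_pi_div_two hsym, rot_sub_pi_div_two, ← mulVec_mulVec]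
  exact (hΨ t).matrix_mulVec Jmat

/-- If `F` has the lattice symmetry `F(−JΨ, φ+π/2) = F(Ψ,φ)` and `(Ψ(t),φ(t))`
solves `Ψ' = R_φ(V + F(Ψ,φ))`, `φ' = ω`, then `(JΨ(t), φ(t) − π/2)` is also a
solution. -/
theorem symmetry_maps_solutions_to_solutions
    (F : (Fin 2 → ℝ) → ℝ → (Fin 2 → ℝ)) (V : Fin 2 → ℝ) (ω : ℝ)
    (hperΨ : ∀ Ψ φ (i : Fin 2), F (Ψ + fun j => if j = i then 2 * π else 0) φ = F Ψ φ)
    (hperφ : ∀ Ψ φ, F Ψ (φ + 2 * π) = F Ψ φ)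
    (hsym : ∀ Ψ φ, F (-(Jmat *ᵥ Ψ)) (φ + π / 2) = F Ψ φ)
    (Ψ : ℝ → Fin 2 → ℝ) (φ : ℝ → ℝ)
    (hΨ : ∀ t, HasDerivAt Ψ (rot (φ t) *ᵥ (V + F (Ψ t) (φ t))) t)
    (hφ : ∀ t, HasDerivAt φ ω t) :
    (∀ t, HasDerivAt (fun s => Jmat *ᵥ Ψ s)
        (rot (φ t - π / 2) *ᵥ (V + F (Jmat *ᵥ Ψ t) (φ t - π / 2))) t) ∧
    (∀ t, HasDerivAt (fun s => φ s - π / 2) ω t) :=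
  symmetry_maps_solutions_to_solutions_general F V ω hsym Ψ φ hΨ hφ
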